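/- (Soundness of AIRACIndL(⫝)) Let ⫝ be a pre-independence relation on a set M and Σ a set of conditional independence atoms. If Σ ⊢ x⃗ ⊥_{z⃗} y⃗ in the deductive system of atomic conditional independence logic, then for every assignment s : Var → M such that s(v⃗) ⫝_{s(u⃗)} s(w⃗) for all atoms v⃗ ⊥_{u⃗} w⃗ ∈ Σ, we have s(x⃗) ⫝_{s(z⃗)} s(y⃗). -/

import Mathlib

/-- A pre-independence relation on a set `M`. `ind A C B` means `A ⫝_C B`
(`A` is independent from `B` over `C`). -/
structure PreIndep (M : Type*) where
  ind : Set M → Set M → Set M → Prop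
  existence : ∀ A B : Set M, ind A A B
  monotonicity : ∀ A B C D : Set M, ind A C B → D ⊆ A → ind D C B
  baseMonotonicity : ∀ A B C D : Set M, D ⊆ C → C ⊆ B → ind A D B → ind A C B
  symmetry : ∀ A B C : Set M, ind A C B → ind B C A
  transitivity : ∀ A B C D : Set M, D ⊆ C → C ⊆ B → ind B C A → ind C D A → ind B D A
  normality : ∀ A B C : Set M, ind A C B → ind (A ∪ C) C B
  finiteCharacter : ∀ A B C : Set M, (∀ A₀ : Set M, A₀ ⊆ A → A₀.Finite → ind A₀ C B) → ind A C B
  antiReflexivity : ∀ A B : Set M, ind A B A → ∀ C : Set M, ind A B C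

/-- Variables of atomic conditional independence logic: a countably
infinite set. -/
abbrev Var := ℕ

/-- A conditional independence atom `x⃗ ⊥_{z⃗} y⃗` is represented as the triple
`(x⃗, z⃗, y⃗)` of finite sequences of variables. -/
abbrev CIndAtom := List Var × List Var × List Var

/-- The deductive system of atomic conditional independence logic:
`CDerives Γ x z y` means `Γ ⊢ x⃗ ⊥_{z⃗} y⃗`. -/
inductive CDerives (Γ : Set CIndAtom) : List Var → List Var → List Var → Prop
  /-- atoms of `Γ` may be used in deductions -/
  | hyp {x z y : List Var} : (x, z, y) ∈ Γ → CDerives Γ x z y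
  /-- (a₅) `x⃗ ⊥_{x⃗} y⃗` -/
  | refl (x y : List Var) : CDerives Γ x x y
  /-- (b₅) from `x⃗ ⊥_{z⃗} y⃗` infer `y⃗ ⊥_{z⃗} x⃗` -/
  | symm {x z y : List Var} : CDerives Γ x z y → CDerives Γ y z x
  /-- (c₅) from `x⃗x⃗' ⊥_{z⃗} y⃗y⃗'` infer `x⃗ ⊥_{z⃗} y⃗` -/
  | weak {x x' z y y' : List Var} :
      CDerives Γ (x ++ x') z (y ++ y') → CDerives Γ x z y
  /-- (d₅) from `x⃗ ⊥_{z⃗} y⃗` infer `x⃗z⃗ ⊥_{z⃗} y⃗z⃗` -/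
  | norm {x z y : List Var} : CDerives Γ x z y → CDerives Γ (x ++ z) z (y ++ z)
  /-- (e₅) from `x⃗ ⊥_{z⃗} y⃗` and `u⃗ ⊥_{z⃗x⃗} y⃗` infer `u⃗ ⊥_{z⃗} y⃗` -/
  | trans {x z y u : List Var} :
      CDerives Γ x z y → CDerives Γ u (z ++ x) y → CDerives Γ u z y
  /-- (f₅) from `y⃗ ⊥_{z⃗} y⃗` and `z⃗x⃗ ⊥_{y⃗} u⃗` infer `x⃗ ⊥_{z⃗} u⃗` -/
  | base {x z y u : List Var} :
      CDerives Γ y z y → CDerives Γ (z ++ x) y u → CDerives Γ x z u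
  /-- (g₅) from `x⃗ ⊥_{z⃗} y⃗` and `x⃗y⃗ ⊥_{z⃗} u⃗` infer `x⃗ ⊥_{z⃗} y⃗u⃗` -/
  | exch {x z y u : List Var} :
      CDerives Γ x z y → CDerives Γ (x ++ y) z u → CDerives Γ x z (y ++ u)
  /-- (h₅) from `x⃗ ⊥_{z⃗} y⃗` infer `πx⃗ ⊥_{τz⃗} σy⃗` for permutations `π`, `τ`, `σ` -/
  | perm {x x' z z' y y' : List Var} :
      CDerives Γ x z y → x.Perm x' → z.Perm z' → y.Perm y' → CDerives Γ x' z' y'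

/-- `CAtomHolds P s x z y`: the conditional independence atom `x⃗ ⊥_{z⃗} y⃗` is
satisfied under the assignment `s`, i.e. `s(x⃗) ⫝_{s(z⃗)} s(y⃗)`. -/
def CAtomHolds {M : Type*} (P : PreIndep M) (s : Var → M)
    (x z y : List Var) : Prop :=
  P.ind (s '' {v : Var | v ∈ x}) (s '' {v : Var | v ∈ z}) (s '' {v : Var | v ∈ y})

/-!
Each rule is sound under a fixed assignment `s`: since `s(x⃗ y⃗) = s(x⃗) ∪ s(y⃗)` and `s(x⃗)`
depends only on the set of variables of `x⃗`, every rule becomes a statement about `⫝` on sets.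
Besides the axioms, those need two derived principles: transitivity with the inclusion `C ⊆ B`
dropped (restored by normality), and the usual form of base monotonicity, `A ⫝_D B` and
`E ⊆ A` give `A ⫝_{D ∪ E} B`. Rule (f₅) is where anti-reflexivity enters:
`y⃗ ⊥_{z⃗} y⃗` yields `y⃗ ⊥_{z⃗} u⃗`.
-/

namespace PreIndep

variable {M : Type*} (P : PreIndep M) {A A' B B' C D E : Set M}

theorem mono_left (h : P.ind A C B) (hA : A' ⊆ A) : P.ind A' C B :=
  P.monotonicity A B C A' h hA

theorem mono_right (h : P.ind A C B) (hB : B' ⊆ B) : P.ind A C B' :=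
  P.symmetry _ _ _ (P.mono_left (P.symmetry _ _ _ h) hB)

theorem union_base_right (h : P.ind A C B) : P.ind A C (B ∪ C) :=
  P.symmetry _ _ _ (P.normality _ _ _ (P.symmetry _ _ _ h))

theorem trans_of_subset (hDC : D ⊆ C) (hB : P.ind B C A) (hC : P.ind C D A) :
    P.ind B D A :=
  P.mono_left (P.transitivity A (B ∪ C) C D hDC Set.subset_union_right
    (P.normality _ _ _ hB) hC) Set.subset_union_left

theorem union_base_of_subset_left (h : P.ind A D B) (hE : E ⊆ A) : P.ind A (D ∪ E) B := by
  have hAD : P.ind B D (A ∪ D) := P.symmetry _ _ _ (P.normality _ _ _ h)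
  have hbase : P.ind B (D ∪ E) (A ∪ D) :=
    P.baseMonotonicity _ _ _ _ Set.subset_union_left
      (Set.union_subset Set.subset_union_right (hE.trans Set.subset_union_left)) hAD
  exact P.symmetry _ _ _ (P.mono_right hbase Set.subset_union_left)

theorem union_base_of_subset_right (h : P.ind A D B) (hE : E ⊆ B) : P.ind A (D ∪ E) B :=
  P.symmetry _ _ _ (P.union_base_of_subset_left (P.symmetry _ _ _ h) hE)

end PreIndep

theorem image_setOf_mem_append {α β : Type*} (s : α → β) (a b : List α) :
    s '' {v | v ∈ a ++ b} = s '' {v | v ∈ a} ∪ s '' {v | v ∈ b} := by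
  simp only [List.mem_append, Set.ofPred_or, Set.image_union]

namespace CAtomHolds

variable {M : Type*} {P : PreIndep M} {s : Var → M} {x x' z z' y y' u : List Var}

theorem symm (h : CAtomHolds P s x z y) : CAtomHolds P s y z x :=
  P.symmetry _ _ _ h

theorem weak (h : CAtomHolds P s (x ++ x') z (y ++ y')) : CAtomHolds P s x z y := by
  rw [CAtomHolds, image_setOf_mem_append, image_setOf_mem_append] at h
  exact P.mono_right (P.mono_left h Set.subset_union_left) Set.subset_union_left

theorem norm (h : CAtomHolds P s x z y) : CAtomHolds P s (x ++ z) z (y ++ z) := by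
  rw [CAtomHolds, image_setOf_mem_append, image_setOf_mem_append]
  exact P.union_base_right (P.normality _ _ _ h)

theorem trans (hx : CAtomHolds P s x z y) (hu : CAtomHolds P s u (z ++ x) y) :
    CAtomHolds P s u z y := by
  rw [CAtomHolds, image_setOf_mem_append] at hu
  set Z := s '' {v | v ∈ z}
  have hzx : P.ind (Z ∪ s '' {v | v ∈ x}) Z (s '' {v | v ∈ y}) :=
    Set.union_comm _ _ ▸ P.normality _ _ _ hx
  exact P.trans_of_subset Set.subset_union_left hu hzx

theorem base (hy : CAtomHolds P s y z y) (hzx : CAtomHolds P s (z ++ x) y u) :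
    CAtomHolds P s x z u := by
  rw [CAtomHolds, image_setOf_mem_append] at hzx
  set Y := s '' {v | v ∈ y}
  set Z := s '' {v | v ∈ z}
  set U := s '' {v | v ∈ u}
  have hx : P.ind (s '' {v | v ∈ x}) (Y ∪ Z) U :=
    P.mono_left (P.union_base_of_subset_left hzx Set.subset_union_left) Set.subset_union_right
  have hyz : P.ind (Y ∪ Z) Z U := P.normality _ _ _ (P.antiReflexivity _ _ hy _)
  exact P.trans_of_subset Set.subset_union_right hx hyz

theorem exch (hy : CAtomHolds P s x z y) (hu : CAtomHolds P s (x ++ y) z u) :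
    CAtomHolds P s x z (y ++ u) := by
  rw [CAtomHolds, image_setOf_mem_append] at hu ⊢
  set X := s '' {v | v ∈ x}
  set Y := s '' {v | v ∈ y}
  set Z := s '' {v | v ∈ z}
  have hU : P.ind (s '' {v | v ∈ u} ∪ (Z ∪ Y)) (Z ∪ Y) X :=
    P.normality _ _ _ <| P.mono_right
      (P.union_base_of_subset_right (P.symmetry _ _ _ hu) Set.subset_union_right)
      Set.subset_union_left
  have hZY : P.ind (Z ∪ Y) Z X := Set.union_comm _ _ ▸ P.normality _ _ _ (P.symmetry _ _ _ hy)
  refine P.symmetry _ _ _ (P.mono_left (P.trans_of_subset Set.subset_union_left hU hZY) ?_)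
  exact Set.union_subset (Set.subset_union_right.trans Set.subset_union_right)
    Set.subset_union_left

theorem perm (h : CAtomHolds P s x z y) (hx : x.Perm x') (hz : z.Perm z') (hy : y.Perm y') :
    CAtomHolds P s x' z' y' := by
  simpa only [CAtomHolds, hx.mem_iff, hz.mem_iff, hy.mem_iff] using h

end CAtomHolds

/-- (Soundness of AIRACIndL(⫝)) If `Γ ⊢ x⃗ ⊥_{z⃗} y⃗`, then every assignment
satisfying all atoms of `Γ` satisfies `x⃗ ⊥_{z⃗} y⃗`. -/
theorem airacindl_sound {M : Type*} (P : PreIndep M) (Γ : Set CIndAtom)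
    (x z y : List Var) (h : CDerives Γ x z y) :
    ∀ s : Var → M, (∀ p ∈ Γ, CAtomHolds P s p.1 p.2.1 p.2.2) →
      CAtomHolds P s x z y := by
  intro s hΓ
  induction h with
  | hyp hmem => exact hΓ _ hmem
  | refl => exact P.existence _ _
  | symm _ ih => exact ih.symm
  | weak _ ih => exact ih.weak
  | norm _ ih => exact ih.norm
  | trans _ _ ih₁ ih₂ => exact ih₁.trans ih₂
  | base _ _ ih₁ ih₂ => exact ih₁.base ih₂
  | exch _ _ ih₁ ih₂ => exact ih₁.exch ih₂
  | perm _ hx hz hy ih => exact ih.perm hx hz hy
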